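/- For p = 1, the type (i) intertwining operator D = ∂_ω − (ξ₂/2)∂_{ξ₁} − (ζ/2)∂_{η₁} − η₂∂_ζ satisfies the intertwining relation with the weight-shifted left action of h₁ and h₂: D ∘ π_L^Λ(h₁) = π_L^{Λ'}(h₁) ∘ D and D ∘ π_L^Λ(h₂) = π_L^{Λ'}(h₂) ∘ D, where Λ' = (Λ₁ + 1/2, Λ₂ − 1/2), π_L^Λ(h₁) = −(ξ₁/2)∂_{ξ₁} − η₁∂_{η₁} − (ζ/2)∂_ζ − (ω/2)∂_ω − Λ₁, π_L^Λ(h₂) = −(ξ₂/2)∂_{ξ₂} − η₂∂_{η₂} − (ζ/2)∂_ζ + (ω/2)∂_ω − Λ₂. -/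

import Mathlib

/- Coordinates: 0 = ξ₁, 1 = ξ₂, 2 = η₁, 3 = η₂, 4 = ζ, 5 = ω -/

/-- smooth functions of six real variables -/
abbrev F6 := (Fin 6 → ℝ) → ℝ

/-- partial derivative in the i-th coordinate -/
noncomputable def pd (i : Fin 6) (f : F6) : F6 := fun x => fderiv ℝ f x (Pi.single i 1)

/-- differential operators -/
abbrev Op := F6 → F6

/-- commutator of operators -/
def opComm (A B : Op) : Op := fun f => A (B f) - B (A f)

/-- π_L^Λ(h₁) -/
noncomputable def Lh1 (Λ1 : ℝ) : Op := fun f x =>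
  -(x 0 / 2) * pd 0 f x - x 2 * pd 2 f x - x 4 / 2 * pd 4 f x - x 5 / 2 * pd 5 f x - Λ1 * f x
/-- π_L^Λ(h₂) -/
noncomputable def Lh2 (Λ2 : ℝ) : Op := fun f x =>
  -(x 1 / 2) * pd 1 f x - x 3 * pd 3 f x - x 4 / 2 * pd 4 f x + x 5 / 2 * pd 5 f x - Λ2 * f x

/-- type (i) intertwiner for p = 1 : D = ∂_ω − (ξ₂/2)∂_{ξ₁} − (ζ/2)∂_{η₁} − η₂ ∂_ζ -/
noncomputable def Dop : Op := fun f x =>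
  pd 5 f x - x 1 / 2 * pd 0 f x - x 4 / 2 * pd 2 f x - x 3 * pd 4 f x

lemma pd_contDiff {f : F6} (hf : ContDiff ℝ (⊤ : ℕ∞) f) (i : Fin 6) : ContDiff ℝ (⊤ : ℕ∞) (pd i f) :=
  (hf.fderiv_right (by simp)).clm_apply contDiff_const

lemma pd_comm {f : F6} (hf : ContDiff ℝ (⊤ : ℕ∞) f) (i j : Fin 6) :
    pd i (pd j f) = pd j (pd i f) := by
  funext x
  have h1 : ∀ y, HasFDerivAt f (fderiv ℝ f y) y := fun y =>
    (hf.differentiable (by simp) y).hasFDerivAt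
  have h2 : HasFDerivAt (fderiv ℝ f) (fderiv ℝ (fderiv ℝ f) x) x :=
    ((hf.fderiv_right (m := 1) (WithTop.coe_le_coe.mpr le_top)).differentiable (by simp) x).hasFDerivAt
  have key : ∀ (v w : Fin 6 → ℝ),
      fderiv ℝ (fun y => fderiv ℝ f y v) x w = fderiv ℝ (fderiv ℝ f) x w v := by
    intro v w
    have h3 : HasFDerivAt (fun y => fderiv ℝ f y v)
        ((fderiv ℝ f x).comp (0 : (Fin 6 → ℝ) →L[ℝ] (Fin 6 → ℝ)) +
          (fderiv ℝ (fderiv ℝ f) x).flip v) x :=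
      h2.clm_apply (hasFDerivAt_const v x)
    rw [h3.fderiv]; simp
  have hsymm := second_derivative_symmetric h1 h2 (Pi.single i 1) (Pi.single j 1)
  have e1 : pd j f = fun y => fderiv ℝ f y (Pi.single j 1) := rfl
  have e2 : pd i f = fun y => fderiv ℝ f y (Pi.single i 1) := rfl
  show fderiv ℝ (pd j f) x (Pi.single i 1) = fderiv ℝ (pd i f) x (Pi.single j 1)
  rw [e1, e2, key, key]
  exact hsymm

/-- expansion of pd over a canonical linear-combination shape -/
lemma pd_comb (i : Fin 6) (a b c d e : ℝ) (k0 k1 k2 k3 : Fin 6) (g0 g1 g2 g3 g4 : F6)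
    (h0 : Differentiable ℝ g0) (h1 : Differentiable ℝ g1) (h2 : Differentiable ℝ g2)
    (h3 : Differentiable ℝ g3) (h4 : Differentiable ℝ g4) :
    pd i (fun x => a * (x k0 * g0 x) + b * (x k1 * g1 x) + c * (x k2 * g2 x)
        + d * (x k3 * g3 x) + e * g4 x)
    = fun x => a * ((if k0 = i then g0 x else 0) + x k0 * pd i g0 x)
        + b * ((if k1 = i then g1 x else 0) + x k1 * pd i g1 x)
        + c * ((if k2 = i then g2 x else 0) + x k2 * pd i g2 x)
        + d * ((if k3 = i then g3 x else 0) + x k3 * pd i g3 x)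
        + e * pd i g4 x := by
  funext x
  have hc : ∀ (k : Fin 6) (g : F6), Differentiable ℝ g →
      HasFDerivAt (fun y => y k * g y)
        ((x k) • fderiv ℝ g x + (g x) • ContinuousLinearMap.proj k) x :=
    fun k g hg => ((ContinuousLinearMap.proj k).hasFDerivAt (x := x)).mul (hg x).hasFDerivAt
  have H : HasFDerivAt (fun x => a * (x k0 * g0 x) + b * (x k1 * g1 x) + c * (x k2 * g2 x)
        + d * (x k3 * g3 x) + e * g4 x)
      (a • ((x k0) • fderiv ℝ g0 x + (g0 x) • ContinuousLinearMap.proj k0)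
        + b • ((x k1) • fderiv ℝ g1 x + (g1 x) • ContinuousLinearMap.proj k1)
        + c • ((x k2) • fderiv ℝ g2 x + (g2 x) • ContinuousLinearMap.proj k2)
        + d • ((x k3) • fderiv ℝ g3 x + (g3 x) • ContinuousLinearMap.proj k3)
        + e • fderiv ℝ g4 x) x :=
    ((((((hc k0 g0 h0).const_mul a).add ((hc k1 g1 h1).const_mul b)).add
      ((hc k2 g2 h2).const_mul c)).add ((hc k3 g3 h3).const_mul d)).add
      (((h4 x).hasFDerivAt).const_mul e))
  have := H.fderiv
  simp only [pd, this, ContinuousLinearMap.add_apply, ContinuousLinearMap.smul_apply,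
    ContinuousLinearMap.proj_apply, Pi.single_apply, smul_eq_mul, mul_ite, mul_one, mul_zero]
  ring

theorem stmt_17 (Λ1 Λ2 : ℝ) (f : F6) (hf : ContDiff ℝ (⊤ : ℕ∞) f) :
    Dop (Lh1 Λ1 f) = Lh1 (Λ1 + 1/2) (Dop f) ∧
    Dop (Lh2 Λ2 f) = Lh2 (Λ2 - 1/2) (Dop f) := by
  have hdf : ∀ j, Differentiable ℝ (pd j f) := fun j =>
    (pd_contDiff hf j).differentiable (by simp)
  have hff : Differentiable ℝ f := hf.differentiable (by simp)
  have hL1 : Lh1 Λ1 f = fun x => (-(1/2) : ℝ) * (x 0 * pd 0 f x) + (-1 : ℝ) * (x 2 * pd 2 f x)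
      + (-(1/2) : ℝ) * (x 4 * pd 4 f x) + (-(1/2) : ℝ) * (x 5 * pd 5 f x) + (-Λ1) * f x := by
    funext x; simp only [Lh1]; ring
  have hL2 : Lh2 Λ2 f = fun x => (-(1/2) : ℝ) * (x 1 * pd 1 f x) + (-1 : ℝ) * (x 3 * pd 3 f x)
      + (-(1/2) : ℝ) * (x 4 * pd 4 f x) + ((1/2) : ℝ) * (x 5 * pd 5 f x) + (-Λ2) * f x := by
    funext x; simp only [Lh2]; ring
  have hD : Dop f = fun x => (-(1/2) : ℝ) * (x 1 * pd 0 f x) + (-(1/2) : ℝ) * (x 4 * pd 2 f x)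
      + (-1 : ℝ) * (x 3 * pd 4 f x) + (0 : ℝ) * (x 0 * f x) + (1 : ℝ) * pd 5 f x := by
    funext x; simp only [Dop]; ring
  have pdL1 : ∀ i, pd i (Lh1 Λ1 f) = fun x =>
      (-(1/2) : ℝ) * ((if (0 : Fin 6) = i then pd 0 f x else 0) + x 0 * pd i (pd 0 f) x)
      + (-1 : ℝ) * ((if (2 : Fin 6) = i then pd 2 f x else 0) + x 2 * pd i (pd 2 f) x)
      + (-(1/2) : ℝ) * ((if (4 : Fin 6) = i then pd 4 f x else 0) + x 4 * pd i (pd 4 f) x)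
      + (-(1/2) : ℝ) * ((if (5 : Fin 6) = i then pd 5 f x else 0) + x 5 * pd i (pd 5 f) x)
      + (-Λ1) * pd i f x := by
    intro i; rw [hL1]
    exact pd_comb i _ _ _ _ _ _ _ _ _ _ _ _ _ _ (hdf 0) (hdf 2) (hdf 4) (hdf 5) hff
  have pdL2 : ∀ i, pd i (Lh2 Λ2 f) = fun x =>
      (-(1/2) : ℝ) * ((if (1 : Fin 6) = i then pd 1 f x else 0) + x 1 * pd i (pd 1 f) x)
      + (-1 : ℝ) * ((if (3 : Fin 6) = i then pd 3 f x else 0) + x 3 * pd i (pd 3 f) x)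
      + (-(1/2) : ℝ) * ((if (4 : Fin 6) = i then pd 4 f x else 0) + x 4 * pd i (pd 4 f) x)
      + ((1/2) : ℝ) * ((if (5 : Fin 6) = i then pd 5 f x else 0) + x 5 * pd i (pd 5 f) x)
      + (-Λ2) * pd i f x := by
    intro i; rw [hL2]
    exact pd_comb i _ _ _ _ _ _ _ _ _ _ _ _ _ _ (hdf 1) (hdf 3) (hdf 4) (hdf 5) hff
  have pdD : ∀ i, pd i (Dop f) = fun x =>
      (-(1/2) : ℝ) * ((if (1 : Fin 6) = i then pd 0 f x else 0) + x 1 * pd i (pd 0 f) x)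
      + (-(1/2) : ℝ) * ((if (4 : Fin 6) = i then pd 2 f x else 0) + x 4 * pd i (pd 2 f) x)
      + (-1 : ℝ) * ((if (3 : Fin 6) = i then pd 4 f x else 0) + x 3 * pd i (pd 4 f) x)
      + (0 : ℝ) * ((if (0 : Fin 6) = i then f x else 0) + x 0 * pd i f x)
      + (1 : ℝ) * pd i (pd 5 f) x := by
    intro i; rw [hD]
    exact pd_comb i _ _ _ _ _ _ _ _ _ _ _ _ _ _ (hdf 0) (hdf 2) (hdf 4) hff (hdf 5)
  have c10 := pd_comm hf 1 0
  have c20 := pd_comm hf 2 0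
  have c30 := pd_comm hf 3 0
  have c40 := pd_comm hf 4 0
  have c50 := pd_comm hf 5 0
  have c21 := pd_comm hf 2 1
  have c31 := pd_comm hf 3 1
  have c41 := pd_comm hf 4 1
  have c51 := pd_comm hf 5 1
  have c32 := pd_comm hf 3 2
  have c42 := pd_comm hf 4 2
  have c52 := pd_comm hf 5 2
  have c43 := pd_comm hf 4 3
  have c53 := pd_comm hf 5 3
  have c54 := pd_comm hf 5 4
  constructor
  · funext x
    show pd 5 (Lh1 Λ1 f) x - x 1 / 2 * pd 0 (Lh1 Λ1 f) x - x 4 / 2 * pd 2 (Lh1 Λ1 f) x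
        - x 3 * pd 4 (Lh1 Λ1 f) x
      = -(x 0 / 2) * pd 0 (Dop f) x - x 2 * pd 2 (Dop f) x - x 4 / 2 * pd 4 (Dop f) x
        - x 5 / 2 * pd 5 (Dop f) x - (Λ1 + 1/2) * Dop f x
    simp only [pdD]
    simp only [pdL1, hD]
    simp only [Fin.reduceEq, reduceIte, if_true, if_false]
    simp only [c10, c20, c30, c40, c50, c21, c31, c41, c51, c32, c42, c52, c43, c53, c54]
    ring
  · funext x
    show pd 5 (Lh2 Λ2 f) x - x 1 / 2 * pd 0 (Lh2 Λ2 f) x - x 4 / 2 * pd 2 (Lh2 Λ2 f) x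
        - x 3 * pd 4 (Lh2 Λ2 f) x
      = -(x 1 / 2) * pd 1 (Dop f) x - x 3 * pd 3 (Dop f) x - x 4 / 2 * pd 4 (Dop f) x
        + x 5 / 2 * pd 5 (Dop f) x - (Λ2 - 1/2) * Dop f x
    simp only [pdD]
    simp only [pdL2, hD]
    simp only [Fin.reduceEq, reduceIte, if_true, if_false]
    simp only [c10, c20, c30, c40, c50, c21, c31, c41, c51, c32, c42, c52, c43, c53, c54]
    ring
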